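/- arXiv:2109.12604 — 2 statements merged into one kernel-verified Lean document; each statement's English description precedes it below -/
import Mathlib

section
/- Fix k ∈ ℕ and suppose x_k, v_k ∈ X. Let (λ_{k+1}, x_{k+1}, v_{k+1}) be one step of the semi-implicit scheme with α_k > 0: θ_k(λ_{k+1} − λ_k)/α_k = A v_{k+1} − b; (x_{k+1} − x_k)/α_k = v_k − x_{k+1}; γ_k(v_{k+1} − v_k)/α_k = μ_β(x_{k+1} − v_{k+1}) − (ξ_{k+1} + Aᵀλ_{k+1}) with ξ_{k+1} ∈ ∂f_β(x_{k+1}) + N_X(x_{k+1}), and parameter updates θ_{k+1} = θ_k/(1+α_k), γ_{k+1} = (γ_k + μ_β α_k)/(1+α_k). With E_k = L_β(x_k, λ*) − L_β(x*, λ_k) + (γ_k/2)‖v_k − x*‖² + (θ_k/2)‖λ_k − λ*‖², we have x_{k+1} ∈ X and E_{k+1} − E_k ≤ −α_k E_{k+1} − α_k⟨ξ_{k+1} + Aᵀλ*, v_{k+1} − v_k⟩ − (γ_k/2)‖v_{k+1} − v_k‖² − (θ_k/2)‖λ_{k+1} − λ_k‖². -/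
open scoped RealInnerProductSpace Pointwise

/-- The smallest singular value of a linear map between Euclidean spaces. -/
noncomputable def sigmaMin {n m : ℕ}
    (A : EuclideanSpace ℝ (Fin n) →L[ℝ] EuclideanSpace ℝ (Fin m)) : ℝ :=
  sInf {c : ℝ | ∃ x : EuclideanSpace ℝ (Fin n), ‖x‖ = 1 ∧ ‖A x‖ = c}

/-- The convex subdifferential. -/
def subdiff {n : ℕ} (f : EuclideanSpace ℝ (Fin n) → ℝ)
    (x : EuclideanSpace ℝ (Fin n)) : Set (EuclideanSpace ℝ (Fin n)) :=
  {p | ∀ y, f x + ⟪p, y - x⟫ ≤ f y}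

/-- The normal cone of `X` at `x` (empty if `x ∉ X`). -/
def normalCone {n : ℕ} (X : Set (EuclideanSpace ℝ (Fin n)))
    (x : EuclideanSpace ℝ (Fin n)) : Set (EuclideanSpace ℝ (Fin n)) :=
  {p | x ∈ X ∧ ∀ z ∈ X, ⟪p, z - x⟫ ≤ 0}

/-! Write `ζ = ξ + Aᵀλ*`. The penalty makes `f_β` `μ_β`-strongly convex on `X`, because
`‖A d‖ ≥ σ_min(A) ‖d‖`; hence `ζ`, a subgradient of `L_β(·, λ*) + δ_X` at `x_{k+1}`, bounds
`L_β(x_{k+1}, λ*)` against both `x_k` and `x*`. The primal step turns `x_k - x_{k+1}` into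
`α_k (v_k - x_{k+1})`. The dual and velocity updates are implicit steps, so the weighted squared
distances to `λ*` and `x*` change by an inner product minus the squared step length. Because
`A x* = b`, the `λ_{k+1}`-terms of the two steps cancel, and the `μ_β`-terms complete to
`-α_k μ_β ‖x_{k+1} - v_{k+1}‖² / 2 ≤ 0`. -/

open Filter Topology ContinuousLinearMap

lemma norm_map_sub_sq_expand {E F : Type*} [NormedAddCommGroup E] [InnerProductSpace ℝ E]
    [CompleteSpace E] [NormedAddCommGroup F] [InnerProductSpace ℝ F] [CompleteSpace F]
    (A : E →L[ℝ] F) (b : F) (x w : E) :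
    ‖A w - b‖ ^ 2 = ‖A x - b‖ ^ 2 + 2 * ⟪adjoint A (A x - b), w - x⟫ + ‖A (w - x)‖ ^ 2 := by
  rw [adjoint_inner_left, ← norm_add_sq_real, map_sub]
  congr 2
  abel

lemma half_sq_norm_sub_of_div_smul_sub_eq {E : Type*} [NormedAddCommGroup E]
    [InnerProductSpace ℝ E] {a α : ℝ} {u₀ u₁ w : E} (hα : α ≠ 0)
    (h : (a / α) • (u₁ - u₀) = w) (c : E) :
    a / 2 * ‖u₁ - c‖ ^ 2 = a / 2 * ‖u₀ - c‖ ^ 2 + α * ⟪w, u₁ - c⟫ - a / 2 * ‖u₁ - u₀‖ ^ 2 := by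
  have hsq := norm_sub_sq_real (u₁ - c) (u₁ - u₀)
  rw [sub_sub_sub_cancel_left] at hsq
  rw [← h, real_inner_smul_left, real_inner_comm, ← mul_assoc, mul_div_cancel₀ _ hα]
  linear_combination (-a / 2) * hsq

lemma dual_velocity_step_energy_eq {E F : Type*} [NormedAddCommGroup E] [InnerProductSpace ℝ E]
    [CompleteSpace E] [NormedAddCommGroup F] [InnerProductSpace ℝ F] [CompleteSpace F]
    (A : E →L[ℝ] F) {b : F} {xs : E} (hA : A xs = b) {α θ γ μ : ℝ} (hα : α ≠ 0)
    {y₀ y₁ ℓ : F} {x v₀ v₁ ξ : E}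
    (hdual : (θ / α) • (y₁ - y₀) = A v₁ - b)
    (hvel : (γ / α) • (v₁ - v₀) = μ • (x - v₁) - (ξ + adjoint A y₁)) :
    (γ + μ * α) / 2 * ‖v₁ - xs‖ ^ 2 + θ / 2 * ‖y₁ - ℓ‖ ^ 2
      = γ / 2 * ‖v₀ - xs‖ ^ 2 + θ / 2 * ‖y₀ - ℓ‖ ^ 2 + α * μ / 2 * ‖x - xs‖ ^ 2
        - α * μ / 2 * ‖x - v₁‖ ^ 2 - α * ⟪ξ + adjoint A ℓ, v₁ - xs⟫
        - γ / 2 * ‖v₁ - v₀‖ ^ 2 - θ / 2 * ‖y₁ - y₀‖ ^ 2 := by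
  have hdualE := half_sq_norm_sub_of_div_smul_sub_eq hα hdual ℓ
  have hvelE := half_sq_norm_sub_of_div_smul_sub_eq hα hvel xs
  have hcross : ⟪ξ + adjoint A y₁, v₁ - xs⟫ = ⟪ξ + adjoint A ℓ, v₁ - xs⟫ + ⟪A v₁ - b, y₁ - ℓ⟫ := by
    rw [inner_add_left, inner_add_left, adjoint_inner_left, adjoint_inner_left, map_sub, hA,
      real_inner_comm (y₁ - ℓ) (A v₁ - b), inner_sub_left]
    ring
  have hsq := norm_add_sq_real (x - v₁) (v₁ - xs)
  rw [sub_add_sub_cancel] at hsq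
  rw [inner_sub_left, real_inner_smul_left, hcross] at hvelE
  linear_combination hdualE + hvelE - α * μ / 2 * hsq

section EuclideanSpace

variable {n m : ℕ}

lemma sigmaMin_nonneg (A : EuclideanSpace ℝ (Fin n) →L[ℝ] EuclideanSpace ℝ (Fin m)) :
    0 ≤ sigmaMin A :=
  Real.sInf_nonneg <| by rintro c ⟨x, -, rfl⟩; exact norm_nonneg _

lemma sigmaMin_mul_norm_le (A : EuclideanSpace ℝ (Fin n) →L[ℝ] EuclideanSpace ℝ (Fin m))
    (u : EuclideanSpace ℝ (Fin n)) :
    sigmaMin A * ‖u‖ ≤ ‖A u‖ := by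
  rcases eq_or_ne u 0 with rfl | hu
  · simp
  have hu' : 0 < ‖u‖ := norm_pos_iff.mpr hu
  have hunit : ‖‖u‖⁻¹ • u‖ = 1 := by
    rw [norm_smul, norm_inv, norm_norm, inv_mul_cancel₀ hu'.ne']
  have h : sigmaMin A ≤ ‖A (‖u‖⁻¹ • u)‖ :=
    csInf_le ⟨0, by rintro c ⟨x, -, rfl⟩; exact norm_nonneg _⟩ ⟨_, hunit, rfl⟩
  rwa [map_smul, norm_smul, norm_inv, norm_norm, inv_mul_eq_div, le_div_iff₀ hu'] at h

def StrongSubgradientOn (X : Set (EuclideanSpace ℝ (Fin n))) (μ : ℝ)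
    (f : EuclideanSpace ℝ (Fin n) → ℝ) : Prop :=
  ∀ x ∈ X, ∀ y ∈ X, ∀ p ∈ subdiff f x, f x + ⟪p, y - x⟫ + μ / 2 * ‖y - x‖ ^ 2 ≤ f y

-- Convexity of `f` lets `t → 0⁺` in the difference quotients of the subgradient inequality.
lemma sub_mem_subdiff_of_mem_subdiff_add {f h : EuclideanSpace ℝ (Fin n) → ℝ}
    (hf : ConvexOn ℝ Set.univ f) {x g p : EuclideanSpace ℝ (Fin n)}
    {C : EuclideanSpace ℝ (Fin n) → ℝ}
    (hh : ∀ d (t : ℝ), h (x + t • d) ≤ h x + t * ⟪g, d⟫ + t ^ 2 * C d)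
    (hp : p ∈ subdiff (fun z => f z + h z) x) :
    p - g ∈ subdiff f x := by
  intro y
  set d := y - x
  have hquot : ∀ t ∈ Set.Ioo (0 : ℝ) 1, ⟪p - g, d⟫ ≤ f y - f x + t * C d := by
    rintro t ⟨ht₀, ht₁⟩
    have hsub := hp (x + t • d)
    simp only [add_sub_cancel_left, real_inner_smul_right] at hsub
    have hcvx : f (x + t • d) ≤ (1 - t) * f x + t * f y := by
      have := hf.2 (Set.mem_univ x) (Set.mem_univ y) (sub_nonneg.2 ht₁.le) ht₀.le (by ring)
      rwa [show (1 - t) • x + t • y = x + t • d by simp only [d, smul_sub, sub_smul, one_smul]; abel,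
        smul_eq_mul, smul_eq_mul] at this
    have := hh d t
    rw [inner_sub_left]
    nlinarith
  have hlim : Tendsto (fun t : ℝ => f y - f x + t * C d) (𝓝[>] 0) (𝓝 (f y - f x)) := by
    have hcont : Continuous fun t : ℝ => f y - f x + t * C d := by fun_prop
    simpa using (hcont.tendsto 0).mono_left nhdsWithin_le_nhds
  have := ge_of_tendsto hlim (eventually_of_mem (Ioo_mem_nhdsGT one_pos) hquot)
  linarith

variable {X : Set (EuclideanSpace ℝ (Fin n))} {μ : ℝ} {f : EuclideanSpace ℝ (Fin n) → ℝ}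

theorem StrongSubgradientOn.add_penalty (hsc : StrongSubgradientOn X μ f)
    (hf : ConvexOn ℝ Set.univ f) {β : ℝ} (hβ : 0 ≤ β)
    (A : EuclideanSpace ℝ (Fin n) →L[ℝ] EuclideanSpace ℝ (Fin m)) (b : EuclideanSpace ℝ (Fin m)) :
    StrongSubgradientOn X (μ + β * sigmaMin A ^ 2) fun z => f z + β / 2 * ‖A z - b‖ ^ 2 := by
  intro x hx y hy p hp
  have hexpand := norm_map_sub_sq_expand A b x
  have hgrad : p - β • adjoint A (A x - b) ∈ subdiff f x := by
    refine sub_mem_subdiff_of_mem_subdiff_add hf (C := fun d => β / 2 * ‖A d‖ ^ 2)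
      (fun d t => le_of_eq ?_) hp
    rw [hexpand, add_sub_cancel_left, real_inner_smul_left, real_inner_smul_right, map_smul,
      norm_smul, Real.norm_eq_abs, mul_pow, sq_abs]
    ring
  have hsc_xy := hsc x hx y hy _ hgrad
  have hσ : (sigmaMin A * ‖y - x‖) ^ 2 ≤ ‖A (y - x)‖ ^ 2 :=
    pow_le_pow_left₀ (mul_nonneg (sigmaMin_nonneg A) (norm_nonneg _)) (sigmaMin_mul_norm_le A _) 2
  rw [inner_sub_left, real_inner_smul_left] at hsc_xy
  linear_combination hsc_xy + β / 2 * hσ - β / 2 * hexpand y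

theorem StrongSubgradientOn.lagrangian_le (hsc : StrongSubgradientOn X μ f)
    (A : EuclideanSpace ℝ (Fin n) →L[ℝ] EuclideanSpace ℝ (Fin m)) (b ℓ : EuclideanSpace ℝ (Fin m))
    {x y ξ : EuclideanSpace ℝ (Fin n)} (hξ : ξ ∈ subdiff f x + normalCone X x) (hy : y ∈ X) :
    f x + ⟪ℓ, A x - b⟫ + ⟪ξ + adjoint A ℓ, y - x⟫ + μ / 2 * ‖y - x‖ ^ 2
      ≤ f y + ⟪ℓ, A y - b⟫ := by
  obtain ⟨p, hp, q, ⟨hx, hq⟩, rfl⟩ := hξ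
  have hsc_xy := hsc x hx y hy p hp
  have hnormal := hq y hy
  have hlin : ⟪adjoint A ℓ, y - x⟫ = ⟪ℓ, A y - b⟫ - ⟪ℓ, A x - b⟫ := by
    rw [adjoint_inner_left, ← inner_sub_right, map_sub, sub_sub_sub_cancel_right]
  rw [inner_add_left, inner_add_left, hlin]
  linarith

theorem StrongSubgradientOn.lagrangian_step_le (hsc : StrongSubgradientOn X μ f) (hμ : 0 ≤ μ)
    (A : EuclideanSpace ℝ (Fin n) →L[ℝ] EuclideanSpace ℝ (Fin m)) {b : EuclideanSpace ℝ (Fin m)}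
    (ℓ : EuclideanSpace ℝ (Fin m)) {xs x₀ x₁ v ξ : EuclideanSpace ℝ (Fin n)} {α : ℝ} (hα : 0 < α)
    (hA : A xs = b) (hxs : xs ∈ X) (hx₀ : x₀ ∈ X) (hξ : ξ ∈ subdiff f x₁ + normalCone X x₁)
    (hprim : α⁻¹ • (x₁ - x₀) = v - x₁) :
    (1 + α) * (f x₁ + ⟪ℓ, A x₁ - b⟫)
      ≤ f x₀ + ⟪ℓ, A x₀ - b⟫ + α * f xs + α * ⟪ξ + adjoint A ℓ, v - xs⟫
        - α * μ / 2 * ‖x₁ - xs‖ ^ 2 := by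
  have h₀ := hsc.lagrangian_le A b ℓ hξ hx₀
  have hs := hsc.lagrangian_le A b ℓ hξ hxs
  rw [hA, sub_self, inner_zero_right, add_zero, ← neg_sub x₁ xs, inner_neg_right, norm_neg] at hs
  have hstep : ⟪ξ + adjoint A ℓ, x₀ - x₁⟫ = -(α * ⟪ξ + adjoint A ℓ, v - x₁⟫) := by
    rw [← hprim, real_inner_smul_right, mul_inv_cancel_left₀ hα.ne', ← inner_neg_right, neg_sub]
  have hsplit := inner_add_right (𝕜 := ℝ) (ξ + adjoint A ℓ) (v - x₁) (x₁ - xs)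
  rw [sub_add_sub_cancel] at hsplit
  linear_combination h₀ + α * hs - hstep - α * hsplit + μ / 2 * sq_nonneg ‖x₀ - x₁‖

end EuclideanSpace

theorem one_iteration_semi_implicit_general {n m : ℕ}
    (X : Set (EuclideanSpace ℝ (Fin n)))
    (f : EuclideanSpace ℝ (Fin n) → ℝ)
    (hfcv : ConvexOn ℝ Set.univ f)
    (A : EuclideanSpace ℝ (Fin n) →L[ℝ] EuclideanSpace ℝ (Fin m))
    (b : EuclideanSpace ℝ (Fin m))
    (μ β μβ : ℝ) (hμ : 0 ≤ μ) (hβ : 0 ≤ β)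
    (hμβ : μβ = μ + β * sigmaMin A ^ 2)
    (hsc : ∀ x ∈ X, ∀ y ∈ X, ∀ p ∈ subdiff f x,
      f x + ⟪p, y - x⟫ + μ / 2 * ‖y - x‖ ^ 2 ≤ f y)
    (fβ : EuclideanSpace ℝ (Fin n) → ℝ)
    (hfβ : ∀ z, fβ z = f z + β / 2 * ‖A z - b‖ ^ 2)
    (Lβ : EuclideanSpace ℝ (Fin n) → EuclideanSpace ℝ (Fin m) → ℝ)
    (hLβ : ∀ z w, Lβ z w = fβ z + ⟪w, A z - b⟫)
    (xs : EuclideanSpace ℝ (Fin n)) (ls : EuclideanSpace ℝ (Fin m))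
    (hxs : xs ∈ X) (hKKT1 : A xs = b)
    (θk θk1 γk γk1 αk : ℝ)
    (hαk : 0 < αk)
    (hθ1 : θk1 = θk / (1 + αk)) (hγ1 : γk1 = (γk + μβ * αk) / (1 + αk))
    (lamk lamk1 : EuclideanSpace ℝ (Fin m))
    (xk xk1 vk vk1 ξ : EuclideanSpace ℝ (Fin n))
    (hxk : xk ∈ X)
    (hdual : (θk / αk) • (lamk1 - lamk) = A vk1 - b)
    (hprim : (αk)⁻¹ • (xk1 - xk) = vk - xk1)
    (hξ : ξ ∈ subdiff fβ xk1 + normalCone X xk1)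
    (hvup : (γk / αk) • (vk1 - vk) =
      μβ • (xk1 - vk1) - (ξ + (ContinuousLinearMap.adjoint A) lamk1))
    (Ek Ek1 : ℝ)
    (hEk : Ek = Lβ xk ls - Lβ xs lamk
      + γk / 2 * ‖vk - xs‖ ^ 2 + θk / 2 * ‖lamk - ls‖ ^ 2)
    (hEk1 : Ek1 = Lβ xk1 ls - Lβ xs lamk1
      + γk1 / 2 * ‖vk1 - xs‖ ^ 2 + θk1 / 2 * ‖lamk1 - ls‖ ^ 2) :
    xk1 ∈ X ∧
      Ek1 - Ek ≤ -(αk * Ek1)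
        - αk * ⟪ξ + (ContinuousLinearMap.adjoint A) ls, vk1 - vk⟫
        - γk / 2 * ‖vk1 - vk‖ ^ 2 - θk / 2 * ‖lamk1 - lamk‖ ^ 2 := by
  have hx1 : xk1 ∈ X := by obtain ⟨-, -, q, hq, -⟩ := hξ; exact hq.1
  have hscβ : StrongSubgradientOn X μβ fβ := by
    rw [hμβ, show fβ = fun z => f z + β / 2 * ‖A z - b‖ ^ 2 from funext hfβ]
    exact StrongSubgradientOn.add_penalty hsc hfcv hβ A b
  have hμβ0 : 0 ≤ μβ := by rw [hμβ]; positivity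
  have hlagr := hscβ.lagrangian_step_le hμβ0 A ls hαk hKKT1 hxs hxk hξ hprim
  have hkin := dual_velocity_step_energy_eq A hKKT1 hαk.ne' (ℓ := ls) hdual hvup
  have hinner := inner_sub_right (𝕜 := ℝ) (ξ + adjoint A ls) (vk1 - xs) (vk - xs)
  rw [sub_sub_sub_cancel_right] at hinner
  have hγ : (1 + αk) * γk1 = γk + μβ * αk := by rw [hγ1]; field_simp
  have hθ : (1 + αk) * θk1 = θk := by rw [hθ1]; field_simp
  refine ⟨hx1, ?_⟩
  simp only [hEk, hEk1, hLβ, hKKT1, sub_self, inner_zero_right, add_zero]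
  linear_combination hlagr + hkin + αk * hinner + ‖vk1 - xs‖ ^ 2 / 2 * hγ
    + ‖lamk1 - ls‖ ^ 2 / 2 * hθ + αk * μβ / 2 * sq_nonneg ‖xk1 - vk1‖

/-- Lemma 5.1: one-iteration analysis of the (uncorrected) semi-implicit scheme (5.1). -/
theorem one_iteration_semi_implicit {n m : ℕ}
    (X : Set (EuclideanSpace ℝ (Fin n)))
    (hXne : X.Nonempty) (hXcl : IsClosed X) (hXcv : Convex ℝ X)
    (f : EuclideanSpace ℝ (Fin n) → ℝ)
    (hfcv : ConvexOn ℝ Set.univ f)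
    (A : EuclideanSpace ℝ (Fin n) →L[ℝ] EuclideanSpace ℝ (Fin m))
    (b : EuclideanSpace ℝ (Fin m))
    (μ β μβ : ℝ) (hμ : 0 ≤ μ) (hβ : 0 ≤ β)
    (hμβ : μβ = μ + β * sigmaMin A ^ 2)
    (hsc : ∀ x ∈ X, ∀ y ∈ X, ∀ p ∈ subdiff f x,
      f x + ⟪p, y - x⟫ + μ / 2 * ‖y - x‖ ^ 2 ≤ f y)
    (fβ : EuclideanSpace ℝ (Fin n) → ℝ)
    (hfβ : ∀ z, fβ z = f z + β / 2 * ‖A z - b‖ ^ 2)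
    (Lβ : EuclideanSpace ℝ (Fin n) → EuclideanSpace ℝ (Fin m) → ℝ)
    (hLβ : ∀ z w, Lβ z w = fβ z + ⟪w, A z - b⟫)
    (xs : EuclideanSpace ℝ (Fin n)) (ls : EuclideanSpace ℝ (Fin m))
    (hxs : xs ∈ X) (hKKT1 : A xs = b)
    (hKKT2 : ∃ p ∈ subdiff f xs, ∃ q ∈ normalCone X xs,
      p + q + (ContinuousLinearMap.adjoint A) ls = 0)
    (θk θk1 γk γk1 αk : ℝ)
    (hθk : 0 < θk) (hγk : 0 < γk) (hαk : 0 < αk)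
    (hθ1 : θk1 = θk / (1 + αk)) (hγ1 : γk1 = (γk + μβ * αk) / (1 + αk))
    (lamk lamk1 : EuclideanSpace ℝ (Fin m))
    (xk xk1 vk vk1 ξ : EuclideanSpace ℝ (Fin n))
    (hxk : xk ∈ X) (hvk : vk ∈ X)
    (hdual : (θk / αk) • (lamk1 - lamk) = A vk1 - b)
    (hprim : (αk)⁻¹ • (xk1 - xk) = vk - xk1)
    (hξ : ξ ∈ subdiff fβ xk1 + normalCone X xk1)
    (hvup : (γk / αk) • (vk1 - vk) =
      μβ • (xk1 - vk1) - (ξ + (ContinuousLinearMap.adjoint A) lamk1))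
    (Ek Ek1 : ℝ)
    (hEk : Ek = Lβ xk ls - Lβ xs lamk
      + γk / 2 * ‖vk - xs‖ ^ 2 + θk / 2 * ‖lamk - ls‖ ^ 2)
    (hEk1 : Ek1 = Lβ xk1 ls - Lβ xs lamk1
      + γk1 / 2 * ‖vk1 - xs‖ ^ 2 + θk1 / 2 * ‖lamk1 - ls‖ ^ 2) :
    xk1 ∈ X ∧
      Ek1 - Ek ≤ -(αk * Ek1)
        - αk * ⟪ξ + (ContinuousLinearMap.adjoint A) ls, vk1 - vk⟫
        - γk / 2 * ‖vk1 - vk‖ ^ 2 - θk / 2 * ‖lamk1 - lamk‖ ^ 2 :=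
  one_iteration_semi_implicit_general X f hfcv A b μ β μβ hμ hβ hμβ hsc fβ hfβ Lβ hLβ xs ls hxs
    hKKT1 θk θk1 γk γk1 αk hαk hθ1 hγ1 lamk lamk1 xk xk1 vk vk1 ξ hxk hdual hprim hξ hvup Ek Ek1 hEk
    hEk1
end

section
/- Let g : ℝⁿ → ℝ ∪ {+∞} be proper, closed and convex, X ⊆ ℝⁿ nonempty closed convex with dom g ∩ X ≠ ∅, t > 0, z ∈ ℝⁿ, A ∈ ℝ^{m×n}, θ > 0, α > 0, r ∈ ℝᵐ. Define F(λ) = θλ − αA·prox_{tg}^X(z − tAᵀλ) − r, where prox_{tg}^X(x) = argmin_{y ∈ X} { g(y) + (1/(2t))‖y − x‖² }. Then for all λ, ξ ∈ ℝᵐ: θ‖λ − ξ‖² ≤ ⟨F(λ) − F(ξ), λ − ξ⟩ ≤ (θ + αt‖A‖²)‖λ − ξ‖². In particular F is monotone and (θ + αt‖A‖²)-Lipschitz continuous. -/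
open scoped RealInnerProductSpace

/-!
Write `S w = A (P (z - t A† w))`, so that `F = θ • id - α • S - r`. The increments of the
argument of `P` are `-t A† (w - u)`, hence by adjointness
`t ⟪S u - S w, w - u⟫ = ⟪P x - P y, x - y⟫` with `x - y = -t A† (w - u)`.
Firm nonexpansiveness of `P` squeezes this between `0` and `‖x - y‖² ≤ t² ‖A‖² ‖w - u‖²`,
and it also makes `P` nonexpansive, which bounds `‖S w - S u‖` by `t ‖A‖² ‖w - u‖`.
-/

section FirmInequality

variable {E : Type*} [NormedAddCommGroup E] [InnerProductSpace ℝ E] {d x : E}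

theorem norm_le_of_sq_le_inner (h : ‖d‖ ^ 2 ≤ ⟪d, x⟫) : ‖d‖ ≤ ‖x‖ := by
  have hcs : ⟪d, x⟫ ≤ ‖d‖ * ‖x‖ := real_inner_le_norm d x
  nlinarith [norm_nonneg d, norm_nonneg x]

theorem inner_le_sq_of_sq_le_inner (h : ‖d‖ ^ 2 ≤ ⟪d, x⟫) : ⟪d, x⟫ ≤ ‖x‖ ^ 2 :=
  calc ⟪d, x⟫ ≤ ‖d‖ * ‖x‖ := real_inner_le_norm d x
    _ ≤ ‖x‖ * ‖x‖ := by gcongr; exact norm_le_of_sq_le_inner h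
    _ = ‖x‖ ^ 2 := (sq _).symm

end FirmInequality

section AdjointComposition

variable {E H : Type*} [NormedAddCommGroup E] [InnerProductSpace ℝ E] [CompleteSpace E]
  [NormedAddCommGroup H] [InnerProductSpace ℝ H] [CompleteSpace H]
  (P : E → E) (A : E →L[ℝ] H) (z : E) {t : ℝ} (w u : H)

theorem sub_adjoint_sub_sub_adjoint :
    (z - t • A.adjoint w) - (z - t • A.adjoint u) = -t • A.adjoint (w - u) := by
  rw [map_sub]
  module

theorem norm_sub_adjoint_sub_sub_adjoint_le (ht : 0 ≤ t) :
    ‖(z - t • A.adjoint w) - (z - t • A.adjoint u)‖ ≤ t * ‖A‖ * ‖w - u‖ := by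
  rw [sub_adjoint_sub_sub_adjoint, norm_smul, norm_neg, Real.norm_of_nonneg ht, mul_assoc,
    ← LinearIsometryEquiv.norm_map ContinuousLinearMap.adjoint A]
  gcongr
  exact A.adjoint.le_opNorm _

theorem mul_inner_comp_adjoint_sub_eq :
    t * ⟪A (P (z - t • A.adjoint u)) - A (P (z - t • A.adjoint w)), w - u⟫ =
      ⟪P (z - t • A.adjoint w) - P (z - t • A.adjoint u),
        (z - t • A.adjoint w) - (z - t • A.adjoint u)⟫ := by
  rw [sub_adjoint_sub_sub_adjoint, real_inner_smul_right, ← map_sub,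
    ContinuousLinearMap.adjoint_inner_right, ← neg_sub, map_neg, inner_neg_left]
  ring

variable {P}

theorem inner_comp_adjoint_sub_nonneg
    (hfirm : ∀ x y, ‖P x - P y‖ ^ 2 ≤ ⟪P x - P y, x - y⟫) (ht : 0 < t) :
    0 ≤ ⟪A (P (z - t • A.adjoint u)) - A (P (z - t • A.adjoint w)), w - u⟫ := by
  have h := mul_inner_comp_adjoint_sub_eq P A z w u (t := t)
  have hpos := (sq_nonneg _).trans (hfirm (z - t • A.adjoint w) (z - t • A.adjoint u))
  nlinarith

theorem inner_comp_adjoint_sub_le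
    (hfirm : ∀ x y, ‖P x - P y‖ ^ 2 ≤ ⟪P x - P y, x - y⟫) (ht : 0 < t) :
    ⟪A (P (z - t • A.adjoint u)) - A (P (z - t • A.adjoint w)), w - u⟫ ≤
      t * ‖A‖ ^ 2 * ‖w - u‖ ^ 2 := by
  have h := mul_inner_comp_adjoint_sub_eq P A z w u (t := t)
  have hle := (inner_le_sq_of_sq_le_inner (hfirm _ _)).trans
    (pow_le_pow_left₀ (norm_nonneg _) (norm_sub_adjoint_sub_sub_adjoint_le A z w u ht.le) 2)
  rw [← h] at hle
  nlinarith

theorem norm_comp_adjoint_sub_le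
    (hfirm : ∀ x y, ‖P x - P y‖ ^ 2 ≤ ⟪P x - P y, x - y⟫) (ht : 0 ≤ t) :
    ‖A (P (z - t • A.adjoint w)) - A (P (z - t • A.adjoint u))‖ ≤ t * ‖A‖ ^ 2 * ‖w - u‖ :=
  calc _ = ‖A (P (z - t • A.adjoint w) - P (z - t • A.adjoint u))‖ := by rw [map_sub]
    _ ≤ ‖A‖ * ‖P (z - t • A.adjoint w) - P (z - t • A.adjoint u)‖ := A.le_opNorm _
    _ ≤ ‖A‖ * (t * ‖A‖ * ‖w - u‖) := by
      gcongr
      exact (norm_le_of_sq_le_inner (hfirm _ _)).trans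
        (norm_sub_adjoint_sub_sub_adjoint_le A z w u ht)
    _ = t * ‖A‖ ^ 2 * ‖w - u‖ := by ring

end AdjointComposition

theorem prox_map_monotone_lipschitz_general {n m : ℕ}
    (t : ℝ) (ht : 0 < t)
    (z : EuclideanSpace ℝ (Fin n))
    (A : EuclideanSpace ℝ (Fin n) →L[ℝ] EuclideanSpace ℝ (Fin m))
    (θ α : ℝ) (hθ : 0 < θ) (hα : 0 < α)
    (r : EuclideanSpace ℝ (Fin m))
    (P : EuclideanSpace ℝ (Fin n) → EuclideanSpace ℝ (Fin n))
    (hfirm : ∀ x y, ‖P x - P y‖ ^ 2 ≤ ⟪P x - P y, x - y⟫)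
    (F : EuclideanSpace ℝ (Fin m) → EuclideanSpace ℝ (Fin m))
    (hF : ∀ w, F w = θ • w
      - α • A (P (z - t • (ContinuousLinearMap.adjoint A) w)) - r) :
    (∀ w u, θ * ‖w - u‖ ^ 2 ≤ ⟪F w - F u, w - u⟫ ∧
      ⟪F w - F u, w - u⟫ ≤ (θ + α * t * ‖A‖ ^ 2) * ‖w - u‖ ^ 2) ∧
    (∀ w u, (0:ℝ) ≤ ⟪F w - F u, w - u⟫) ∧
    LipschitzWith (θ + α * t * ‖A‖ ^ 2).toNNReal F := by
  set S := fun w => A (P (z - t • A.adjoint w))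
  have hFS : ∀ w u, F w - F u = θ • (w - u) + α • (S u - S w) := fun w u => by
    rw [hF, hF]
    module
  have hinner : ∀ w u, ⟪F w - F u, w - u⟫ = θ * ‖w - u‖ ^ 2 + α * ⟪S u - S w, w - u⟫ :=
    fun w u => by
      rw [hFS, inner_add_left, real_inner_smul_left, real_inner_smul_left,
        real_inner_self_eq_norm_sq]
  have bounds : ∀ w u, θ * ‖w - u‖ ^ 2 ≤ ⟪F w - F u, w - u⟫ ∧
      ⟪F w - F u, w - u⟫ ≤ (θ + α * t * ‖A‖ ^ 2) * ‖w - u‖ ^ 2 := fun w u => by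
    have hlo := inner_comp_adjoint_sub_nonneg A z w u hfirm ht
    have hhi := inner_comp_adjoint_sub_le A z w u hfirm ht
    rw [hinner]
    constructor <;> nlinarith
  refine ⟨bounds, fun w u => (by positivity : 0 ≤ θ * ‖w - u‖ ^ 2).trans (bounds w u).1, ?_⟩
  refine LipschitzWith.of_dist_le_mul fun w u => ?_
  rw [Real.coe_toNNReal _ (by positivity), dist_eq_norm, dist_eq_norm, hFS]
  calc ‖θ • (w - u) + α • (S u - S w)‖ ≤ θ * ‖w - u‖ + α * ‖S u - S w‖ := by
        refine (norm_add_le _ _).trans_eq ?_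
        rw [norm_smul, norm_smul, Real.norm_of_nonneg hθ.le, Real.norm_of_nonneg hα.le]
    _ ≤ θ * ‖w - u‖ + α * (t * ‖A‖ ^ 2 * ‖u - w‖) := by
        gcongr
        exact norm_comp_adjoint_sub_le A z u w hfirm ht.le
    _ = (θ + α * t * ‖A‖ ^ 2) * ‖w - u‖ := by rw [norm_sub_rev]; ring

/-- Monotonicity and Lipschitz continuity (6.10) of the nonlinear map
`F(λ) = θλ − αA prox_{tg}^X(z − tAᵀλ) − r`. -/
theorem prox_map_monotone_lipschitz {n m : ℕ}
    (g : EuclideanSpace ℝ (Fin n) → ℝ)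
    (X : Set (EuclideanSpace ℝ (Fin n)))
    (hgcv : ConvexOn ℝ Set.univ g)
    (hXne : X.Nonempty) (hXcl : IsClosed X) (hXcv : Convex ℝ X)
    (t : ℝ) (ht : 0 < t)
    (z : EuclideanSpace ℝ (Fin n))
    (A : EuclideanSpace ℝ (Fin n) →L[ℝ] EuclideanSpace ℝ (Fin m))
    (θ α : ℝ) (hθ : 0 < θ) (hα : 0 < α)
    (r : EuclideanSpace ℝ (Fin m))
    (P : EuclideanSpace ℝ (Fin n) → EuclideanSpace ℝ (Fin n))
    (hP : ∀ x, P x ∈ X ∧ ∀ y ∈ X,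
      g (P x) + 1 / (2 * t) * ‖P x - x‖ ^ 2 ≤ g y + 1 / (2 * t) * ‖y - x‖ ^ 2)
    (hfirm : ∀ x y, ‖P x - P y‖ ^ 2 ≤ ⟪P x - P y, x - y⟫)
    (F : EuclideanSpace ℝ (Fin m) → EuclideanSpace ℝ (Fin m))
    (hF : ∀ w, F w = θ • w
      - α • A (P (z - t • (ContinuousLinearMap.adjoint A) w)) - r) :
    (∀ w u, θ * ‖w - u‖ ^ 2 ≤ ⟪F w - F u, w - u⟫ ∧
      ⟪F w - F u, w - u⟫ ≤ (θ + α * t * ‖A‖ ^ 2) * ‖w - u‖ ^ 2) ∧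
    (∀ w u, (0:ℝ) ≤ ⟪F w - F u, w - u⟫) ∧
    LipschitzWith (θ + α * t * ‖A‖ ^ 2).toNNReal F :=
  prox_map_monotone_lipschitz_general t ht z A θ α hθ hα r P hfirm F hF
end
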